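/- Let W be a constant algebraic Weyl tensor on ℝ^4 and define K_{ij}(x) := −(1/3) W_{μijν} x^μ x^ν / |x|^4 for x ≠ 0. Then K is transverse-traceless with respect to the Euclidean metric: Σ_i K_{ii}(x) = 0 and Σ_i ∂_i K_{ij}(x) = 0 for all x ≠ 0 and all j. -/

import Mathlib

/-!
Write `K_{ij} = -(1/3) Q_{ij} / |x|⁴` with `Q_{ij}(x) = W_{μijν} xᵘ xᵛ`. The trace `Q_{ii}` contracts
`W` over its middle pair, which pair symmetry turns into the vanishing trace over the outer pair.
By the quotient rule, `∂ᵢK_{ij} = -(1/3) (|x|² ∂ᵢQ_{ij} - 4 xⁱ Q_{ij}) / |x|⁶`. Here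
`xⁱ Q_{ij} = W_{μijν} xᵘ xⁱ xᵛ` vanishes because `W` is antisymmetric in `(μ, i)`, and
`∂ᵢQ_{ij} = W_{iijν} xᵛ + W_{μiji} xᵘ` vanishes by antisymmetry and tracelessness.
-/

/-- A constant 4-tensor on `ℝ⁴` with the algebraic symmetries of the Weyl tensor. -/
def IsWeyl (W : Fin 4 → Fin 4 → Fin 4 → Fin 4 → ℝ) : Prop :=
  (∀ k i j l, W k i j l = - W i k j l) ∧
  (∀ k i j l, W k i j l = - W k i l j) ∧
  (∀ k i j l, W k i j l = W j l k i) ∧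
  (∀ k i j l, W k i j l + W i j k l + W j k i l = 0) ∧
  (∀ i j, (∑ k, W k i j k) = 0)

open Finset

section Calculus

variable {E : Type*} [NormedAddCommGroup E] [NormedSpace ℝ E]

theorem fderiv_div_apply {c d : E → ℝ} {x : E} (hc : DifferentiableAt ℝ c x)
    (hd : DifferentiableAt ℝ d x) (hdx : d x ≠ 0) (v : E) :
    fderiv ℝ (fun y => c y / d y) x v
      = (fderiv ℝ c x v * d x - c x * fderiv ℝ d x v) / d x ^ 2 := by
  have h := hc.hasFDerivAt.mul ((hasDerivAt_inv hdx).comp_hasFDerivAt x hd.hasFDerivAt)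
  have hcd : (fun y => c y / d y) = c * (fun t => t⁻¹) ∘ d := by
    ext y
    simp [div_eq_mul_inv]
  rw [hcd, h.fderiv]
  simp only [neg_smul, smul_neg, Function.comp_apply, add_apply, neg_apply, smul_apply,
    smul_eq_mul]
  field_simp
  linarith

end Calculus

section Coordinates

variable {ι : Type*} [Fintype ι]

theorem sum_sq_ne_zero {x : ι → ℝ} (hx : x ≠ 0) : ∑ m, x m ^ 2 ≠ 0 := by
  simpa [sq, sum_mul_self_eq_zero_iff, funext_iff] using hx

def quadForm (A : ι → ι → ℝ) (y : ι → ℝ) : ℝ := ∑ μ, ∑ ν, A μ ν * y μ * y ν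

theorem differentiableAt_quadForm (A : ι → ι → ℝ) (x : ι → ℝ) :
    DifferentiableAt ℝ (quadForm A) x := by
  unfold quadForm
  fun_prop

theorem fderiv_quadForm_apply (A : ι → ι → ℝ) (x v : ι → ℝ) :
    fderiv ℝ (quadForm A) x v = ∑ μ, ∑ ν, A μ ν * (x μ * v ν + x ν * v μ) := by
  have h : HasFDerivAt (quadForm A) (∑ μ, ∑ ν,
      ((A μ ν * x μ) • ContinuousLinearMap.proj ν + x ν • A μ ν • ContinuousLinearMap.proj μ)) x :=
    .fun_sum fun μ _ => .fun_sum fun ν _ =>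
      ((hasFDerivAt_apply (𝕜 := ℝ) μ x).const_mul (A μ ν)).fun_mul
        (hasFDerivAt_apply (𝕜 := ℝ) ν x)
  simp only [h.fderiv, _root_.sum_apply, add_apply, smul_apply, ContinuousLinearMap.proj_apply,
    smul_eq_mul]
  exact sum_congr rfl fun μ _ => sum_congr rfl fun ν _ => by ring

variable [DecidableEq ι]

theorem fderiv_sq_sum_sq_apply_single (x : ι → ℝ) (i : ι) :
    fderiv ℝ (fun y : ι → ℝ => (∑ m, y m ^ 2) ^ 2) x (Pi.single i 1)
      = 4 * (∑ m, x m ^ 2) * x i := by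
  have h : HasFDerivAt (fun y : ι → ℝ => ∑ m, y m ^ 2)
      (∑ m, (2 * x m) • ContinuousLinearMap.proj m) x :=
    .fun_sum fun m _ => by simpa using (hasFDerivAt_apply (𝕜 := ℝ) m x).pow 2
  rw [(h.pow 2).fderiv]
  simp only [Nat.add_one_sub_one, pow_one, nsmul_eq_mul, Nat.cast_ofNat, smul_apply,
    _root_.sum_apply, ContinuousLinearMap.proj_apply, Pi.single_apply, smul_eq_mul, mul_ite,
    mul_one, mul_zero, sum_ite_eq', mem_univ, ↓reduceIte]
  ring

theorem sum_fderiv_div_apply_single {P : ι → (ι → ℝ) → ℝ} {g : (ι → ℝ) → ℝ} {x : ι → ℝ}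
    (hP : ∀ i, DifferentiableAt ℝ (P i) x) (hg : DifferentiableAt ℝ g x) (hgx : g x ≠ 0) :
    ∑ i, fderiv ℝ (fun y => P i y / g y) x (Pi.single i 1)
      = (g x * ∑ i, fderiv ℝ (P i) x (Pi.single i 1)
          - ∑ i, P i x * fderiv ℝ g x (Pi.single i 1)) / g x ^ 2 := by
  simp only [fderiv_div_apply (hP _) hg hgx, ← sum_div, sum_sub_distrib, mul_sum, mul_comm]

end Coordinates

section Tensor

variable {ι : Type*} [Fintype ι] (W : ι → ι → ι → ι → ℝ)

theorem sum_quadForm_trace_eq_zero (h : ∀ μ ν, ∑ i, W μ i i ν = 0) (x : ι → ℝ) :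
    ∑ i, quadForm (fun μ ν => W μ i i ν) x = 0 := by
  unfold quadForm
  rw [sum_comm]
  refine sum_eq_zero fun μ _ => ?_
  rw [sum_comm]
  refine sum_eq_zero fun ν _ => ?_
  rw [← sum_mul, ← sum_mul, h, zero_mul, zero_mul]

theorem sum_quadForm_mul_eq_zero (h : ∀ μ i j ν, W μ i j ν = -W i μ j ν) (j : ι) (x : ι → ℝ) :
    ∑ i, quadForm (fun μ ν => W μ i j ν) x * x i = 0 := by
  set S := ∑ i, quadForm (fun μ ν => W μ i j ν) x * x i
  have hS : S = -S := by
    simp only [S, quadForm, sum_mul, ← sum_neg_distrib]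
    rw [sum_comm]
    refine sum_congr rfl fun μ _ => sum_congr rfl fun i _ => sum_congr rfl fun ν _ => ?_
    rw [h μ i j ν]
    ring
  linarith

theorem sum_fderiv_quadForm_apply_single_eq_zero [DecidableEq ι]
    (h : ∀ μ i j ν, W μ i j ν = -W i μ j ν) (j : ι) (htr : ∀ μ, ∑ i, W μ i j i = 0)
    (x : ι → ℝ) :
    ∑ i, fderiv ℝ (quadForm (fun μ ν => W μ i j ν)) x (Pi.single i 1) = 0 := by
  have hdiag : ∀ i ν, W i i j ν = 0 := fun i ν => by linarith [h i i j ν]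
  simp only [fderiv_quadForm_apply, Pi.single_apply, mul_ite, mul_one, mul_zero, mul_add,
    sum_add_distrib, sum_ite_eq', mem_univ, ↓reduceIte, sum_ite_irrel, sum_const_zero, hdiag,
    zero_mul, add_zero]
  rw [sum_comm]
  simp [← sum_mul, htr]

end Tensor

namespace IsWeyl

variable {W : Fin 4 → Fin 4 → Fin 4 → Fin 4 → ℝ}

theorem sum_contract_two_three_eq_zero (hW : IsWeyl W) (μ ν : Fin 4) : ∑ i, W μ i i ν = 0 := by
  obtain ⟨-, -, hpair, -, htr⟩ := hW
  simpa only [hpair μ] using htr ν μ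

theorem sum_contract_two_four_eq_zero (hW : IsWeyl W) (μ j : Fin 4) : ∑ i, W μ i j i = 0 := by
  obtain ⟨hanti, -, -, -, htr⟩ := hW
  simp only [hanti μ, sum_neg_distrib, htr μ j, neg_zero]

end IsWeyl

theorem stmt_12 (W : Fin 4 → Fin 4 → Fin 4 → Fin 4 → ℝ) (hW : IsWeyl W) :
    ∀ x : Fin 4 → ℝ, x ≠ 0 →
      ((∑ i, (-(1/3 : ℝ) * ∑ μ, ∑ ν, W μ i i ν * x μ * x ν) / (∑ m, x m ^ 2) ^ 2) = 0) ∧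
      ∀ j, (∑ i, fderiv ℝ
          (fun y : Fin 4 → ℝ =>
            (-(1/3 : ℝ) * ∑ μ, ∑ ν, W μ i j ν * y μ * y ν) / (∑ m, y m ^ 2) ^ 2)
          x (Pi.single i 1)) = 0 := by
  intro x hx
  have hg : (∑ m, x m ^ 2) ^ 2 ≠ 0 := pow_ne_zero 2 (sum_sq_ne_zero hx)
  refine ⟨?_, fun j => ?_⟩
  · have htrace := sum_quadForm_trace_eq_zero W hW.sum_contract_two_three_eq_zero x
    simp only [quadForm] at htrace
    rw [← sum_div, ← mul_sum, htrace, mul_zero, zero_div]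
  · refine (sum_fderiv_div_apply_single
      (P := fun i y => -(1/3 : ℝ) * quadForm (fun μ ν => W μ i j ν) y)
      (fun i => (differentiableAt_quadForm _ x).const_mul _) (by fun_prop) hg).trans ?_
    simp only [fderiv_const_mul (differentiableAt_quadForm _ x), smul_apply, smul_eq_mul,
      fderiv_sq_sum_sq_apply_single, ← mul_sum]
    have hflux : ∑ i, -(1/3 : ℝ) * quadForm (fun μ ν => W μ i j ν) x
        * (4 * (∑ m, x m ^ 2) * x i) = 0 := by
      rw [← mul_zero (-(4/3 : ℝ) * ∑ m, x m ^ 2), ← sum_quadForm_mul_eq_zero W hW.1 j x,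
        mul_sum univ (fun i => quadForm (fun μ ν => W μ i j ν) x * x i)]
      exact sum_congr rfl fun i _ => by ring
    rw [sum_fderiv_quadForm_apply_single_eq_zero W hW.1 j
      (fun μ => hW.sum_contract_two_four_eq_zero μ j) x, hflux]
    simp
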